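/- arXiv:2210.03626 — 9 statements merged into one kernel-verified Lean document; each statement's English description precedes it below -/
import Mathlib

section
/- Let R be a commutative ring with identity and M a reduced multiplication R-module. If P is a minimal prime submodule of M and a ∈ (P :_R M), then the annihilator of the coset a + Ann_R(M) in the quotient ring R/Ann_R(M) is not contained in (P :_R M)/Ann_R(M). -/
variable {R : Type*} [CommRing R] {M : Type*} [AddCommGroup M] [Module R M]

/-- `M` is a multiplication module: every submodule is `IM` for some ideal `I`. -/
def IsMultiplicationModule (R M : Type*) [CommRing R] [AddCommGroup M] [Module R M] : Prop :=
  ∀ N : Submodule R M, ∃ I : Ideal R, N = I • (⊤ : Submodule R M)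

/-- A prime submodule. -/
def Submodule.IsPrimeSubmodule (P : Submodule R M) : Prop :=
  P ≠ ⊤ ∧ ∀ (r : R) (m : M), r • m ∈ P → m ∈ P ∨ r ∈ P.colon ⊤

/-- `M` is reduced: the intersection of all prime submodules is zero. -/
def IsReducedModule (R M : Type*) [CommRing R] [AddCommGroup M] [Module R M] : Prop :=
  sInf {P : Submodule R M | P.IsPrimeSubmodule} = ⊥

/-- A minimal prime submodule of `M`. -/
def Submodule.IsMinimalPrime (P : Submodule R M) : Prop :=
  P.IsPrimeSubmodule ∧ ∀ Q : Submodule R M, Q.IsPrimeSubmodule → Q ≤ P → Q = P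

/-- `𝔓_K`: the intersection of all minimal prime submodules containing `K`
(equal to `M` if there are none). -/
def primeRad (K : Submodule R M) : Submodule R M :=
  sInf {P : Submodule R M | P.IsMinimalPrime ∧ K ≤ P}

/-- `V(K)`: the set of minimal prime submodules containing `K`. -/
def Vset (K : Submodule R M) : Set (Submodule R M) :=
  {P : Submodule R M | P.IsMinimalPrime ∧ K ≤ P}

/-- A quasi `z°`-submodule. -/
def IsQuasiZSubmodule (N : Submodule R M) : Prop :=
  N ≠ ⊤ ∧ ∀ a ∈ N.colon ⊤, primeRad (Ideal.span {a} • (⊤ : Submodule R M)) ≤ N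

/-- `𝔓_I` for an ideal: intersection of all minimal prime ideals of `R` containing `I`. -/
def idealPrimeRad (I : Ideal R) : Ideal R :=
  sInf {p : Ideal R | p ∈ minimalPrimes R ∧ I ≤ p}

/-- A `z°`-ideal of `R`. -/
def IsZIdeal (I : Ideal R) : Prop :=
  I ≠ ⊤ ∧ ∀ a ∈ I, idealPrimeRad (Ideal.span {a}) ≤ I

/-- `(0 :_M J)` for an ideal `J`. -/
def pointAnn (J : Ideal R) : Submodule R M where
  carrier := {m : M | ∀ j ∈ J, j • m = 0}
  zero_mem' := by intro j _; simp
  add_mem' := by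
    intro a b ha hb j hj
    rw [smul_add, ha j hj, hb j hj, add_zero]
  smul_mem' := by
    intro c m hm j hj
    rw [smul_comm, hm j hj, smul_zero]


lemma aux_mem_ideal_smul_span {R : Type*} [CommRing R] {M : Type*} [AddCommGroup M] [Module R M]
    {q : Ideal R} {x z : M} (hz : z ∈ q • Submodule.span R {x}) : ∃ e ∈ q, e • x = z := by
  refine Submodule.smul_induction_on hz ?_ ?_
  · intro r hr n hn
    obtain ⟨c, rfl⟩ := Submodule.mem_span_singleton.mp hn
    exact ⟨r * c, q.mul_mem_right c hr, (mul_smul r c x).symm ▸ rfl⟩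
  · rintro y z ⟨e, he, rfl⟩ ⟨f, hf, rfl⟩
    exact ⟨e + f, q.add_mem he hf, by rw [add_smul]⟩

theorem stmt0 (hmul : IsMultiplicationModule R M) (hred : IsReducedModule R M)
    (P : Submodule R M) (hP : P.IsMinimalPrime) (a : R) (ha : a ∈ P.colon ⊤) :
    ¬ ({x : R ⧸ ((⊥ : Submodule R M).colon ⊤) |
          x * Ideal.Quotient.mk ((⊥ : Submodule R M).colon ⊤) a = 0} ⊆
        (Ideal.map (Ideal.Quotient.mk ((⊥ : Submodule R M).colon ⊤)) (P.colon ⊤) :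
          Set (R ⧸ ((⊥ : Submodule R M).colon ⊤)))) := by
  intro hsub
  set A : Ideal R := (⊥ : Submodule R M).colon ⊤ with hA
  set p : Ideal R := P.colon ⊤ with hp
  have memA : ∀ r : R, r ∈ A ↔ ∀ m : M, r • m = 0 := fun r =>
    ⟨fun h m => (Submodule.mem_bot R).mp (Submodule.mem_colon.mp h m trivial),
     fun h => Submodule.mem_colon.mpr fun m _ => (Submodule.mem_bot R).mpr (h m)⟩
  have hAp : A ≤ p := fun r hr => Submodule.mem_colon.mpr fun m hm => by
    rw [(memA r).mp hr m]; exact P.zero_mem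
  -- the assumed inclusion gives:
  have H : ∀ b : R, b * a ∈ A → b ∈ p := by
    intro b hb
    have h1 : Ideal.Quotient.mk A b ∈
        {x : R ⧸ A | x * Ideal.Quotient.mk A a = 0} := by
      show Ideal.Quotient.mk A b * Ideal.Quotient.mk A a = 0
      rw [← map_mul, Ideal.Quotient.eq_zero_iff_mem]
      exact hb
    obtain ⟨y, hy, hyb⟩ := Ideal.mem_map_iff_of_surjective _
      Ideal.Quotient.mk_surjective |>.mp (hsub h1)
    have hd : y - b ∈ A := Ideal.Quotient.eq.mp hyb
    have : b = y - (y - b) := by ring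
    rw [this]
    exact p.sub_mem hy (hAp hd)
  -- basic consequences of reducedness
  have hsq : ∀ (r : R) (m : M), r • r • m = 0 → r • m = 0 := by
    intro r m h
    have hmem : r • m ∈ sInf {P : Submodule R M | P.IsPrimeSubmodule} := by
      rw [Submodule.mem_sInf]
      intro P' hP'
      rcases hP'.2 r (r • m) (by rw [h]; exact P'.zero_mem) with h1 | h1
      · exact h1
      · exact Submodule.mem_colon.mp h1 m trivial
    rwa [hred, Submodule.mem_bot] at hmem
  have hpow : ∀ (n : ℕ) (r : R) (m : M), r ^ (n + 1) • m = 0 → r • m = 0 := by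
    intro n
    induction n with
    | zero => intro r m h; rwa [pow_one] at h
    | succ k ih =>
      intro r m h
      apply ih
      apply hsq
      rw [smul_smul, ← pow_add]
      have he : (k + 1) + (k + 1) = k + (k + 2) := by ring
      rw [he, pow_add, mul_smul, h, smul_zero]
  -- P ≠ ⊤ and primality of p
  have hPtop : P ≠ ⊤ := hP.1.1
  have honep : (1 : R) ∉ p := by
    intro h1
    apply hPtop
    rw [eq_top_iff]
    intro m _
    simpa using Submodule.mem_colon.mp h1 m trivial
  have hpPrime : p.IsPrime := by
    constructor
    · intro h; exact honep (h ▸ trivial)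
    · intro r s hrs
      by_cases hr : r ∈ p
      · exact Or.inl hr
      · refine Or.inr (Submodule.mem_colon.mpr fun m _ => ?_)
        have hrm : r • s • m ∈ P := by
          rw [← mul_smul]
          exact Submodule.mem_colon.mp hrs m trivial
        rcases hP.1.2 r (s • m) hrm with h1 | h1
        · exact h1
        · exact absurd h1 hr
  -- the multiplicative set
  let S : Submonoid R :=
    { carrier := {z | ∃ s ∉ p, ∃ n : ℕ, z = s * a ^ n}
      one_mem' := ⟨1, honep, 0, by ring⟩
      mul_mem' := by
        rintro x y ⟨s, hs, n, rfl⟩ ⟨t, ht, m, rfl⟩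
        exact ⟨s * t, fun h => (hpPrime.mem_or_mem h).elim hs ht, n + m, by ring⟩ }
  have hdisjAS : Disjoint (A : Set R) (S : Set R) := by
    rw [Set.disjoint_left]
    rintro z hz ⟨s, hs, n, rfl⟩
    cases n with
    | zero =>
      apply hs
      apply hAp
      simpa using hz
    | succ k =>
      apply hs
      apply H s
      rw [memA]
      intro m
      apply hpow k
      have : (s * a) ^ (k + 1) = s ^ k * (s * a ^ (k + 1)) := by ring
      rw [this, mul_smul, (memA _).mp hz m, smul_zero]
  obtain ⟨q, hqPrime, hAq, hdisj⟩ := Ideal.exists_le_prime_disjoint A S hdisjAS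
  have hq_p : q ≤ p := by
    intro z hz
    by_contra hzp
    exact Set.disjoint_left.mp hdisj hz ⟨z, hzp, 0, by ring⟩
  have ha_q : a ∉ q := fun h =>
    Set.disjoint_left.mp hdisj h ⟨1, honep, 1, by ring⟩
  set Q : Submodule R M := q • ⊤ with hQ
  have hQP : Q ≤ P := Submodule.smul_le.mpr fun r hr n _ =>
    Submodule.mem_colon.mp (hq_p hr) n trivial
  have hQtop : Q ≠ ⊤ := fun h => hPtop (top_le_iff.mp (h ▸ hQP))
  -- Claim A : (Q : M) ≤ q
  have claimA : Q.colon ⊤ ≤ q := by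
    intro r hr
    by_contra hrq
    apply hQtop
    rw [eq_top_iff]
    intro x _
    obtain ⟨J, hJ⟩ := hmul (Submodule.span R {x})
    have hx : x ∈ J • (⊤ : Submodule R M) := hJ ▸ Submodule.mem_span_singleton_self x
    have h1 : r • x ∈ J • Q := by
      refine Submodule.smul_induction_on (p := fun z => r • z ∈ J • Q) hx ?_ ?_
      · intro j hj y _
        have hcomm : r • (j • y) = j • (r • y) := smul_comm r j y
        rw [hcomm]
        exact Submodule.smul_mem_smul hj (Submodule.mem_colon.mp hr y trivial)
      · intro y z hy hz
        rw [smul_add]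
        exact Submodule.add_mem _ hy hz
    have h2 : r • x ∈ q • Submodule.span R {x} := by
      rw [hJ, ← Submodule.smul_assoc, smul_eq_mul, mul_comm, ← smul_eq_mul,
        Submodule.smul_assoc]
      exact h1
    obtain ⟨e, he, hex⟩ := aux_mem_ideal_smul_span h2
    have hJq : J ≤ q := by
      intro j hj
      have hrj : (r - e) * j ∈ A := by
        rw [memA]
        intro y
        have hjy : j • y ∈ Submodule.span R {x} := by
          rw [hJ]; exact Submodule.smul_mem_smul hj trivial
        obtain ⟨c, hc⟩ := Submodule.mem_span_singleton.mp hjy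
        rw [mul_smul, ← hc, smul_comm, sub_smul, hex, sub_self, smul_zero]
      rcases hqPrime.mem_or_mem (hAq hrj) with h | h
      · exact absurd (by simpa using q.add_mem h he : r ∈ q) hrq
      · exact h
    exact Submodule.smul_mono hJq le_rfl (hJ ▸ Submodule.mem_span_singleton_self x)
  have hq_colon : Q.colon ⊤ = q :=
    le_antisymm claimA fun z hz => Submodule.mem_colon.mpr fun y _ =>
      Submodule.smul_mem_smul hz trivial
  -- Q is a prime submodule
  have hQprime : Q.IsPrimeSubmodule := by
    refine ⟨hQtop, fun r m hrm => ?_⟩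
    by_cases hm : m ∈ Q
    · exact Or.inl hm
    · refine Or.inr ?_
      obtain ⟨I, hI⟩ := hmul (Submodule.span R {m})
      have hIq : ¬I ≤ q := fun h =>
        hm (Submodule.smul_mono h le_rfl (hI ▸ Submodule.mem_span_singleton_self m))
      obtain ⟨i, hiI, hiq⟩ := SetLike.not_le_iff_exists.mp hIq
      have hri : r * i ∈ Q.colon ⊤ := by
        refine Submodule.mem_colon.mpr fun y _ => ?_
        have hiy : i • y ∈ Submodule.span R {m} := by
          rw [hI]; exact Submodule.smul_mem_smul hiI trivial
        obtain ⟨c, hc⟩ := Submodule.mem_span_singleton.mp hiy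
        have : (r * i) • y = c • (r • m) := by
          rw [mul_smul, ← hc, smul_comm r c, ← mul_smul, mul_comm, mul_smul]
        rw [this]
        exact Q.smul_mem c hrm
      rcases hqPrime.mem_or_mem (claimA hri) with h | h
      · rw [hq_colon]; exact h
      · exact absurd h hiq
  -- minimality
  have hQP' : Q = P := hP.2 Q hQprime hQP
  apply ha_q
  rw [← hq_colon, hQP']
  exact ha
end

section
/- Let M be a faithful reduced multiplication R-module. For each a ∈ R, the set V(Ann_R(a)M) of minimal prime submodules containing Ann_R(a)M equals Min(M) \ V(aM), where V(aM) is the set of minimal prime submodules containing aM. In particular V(Ann_R(a)M) and V(aM) are disjoint and their union is Min(M). -/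
variable {R : Type*} [CommRing R] {M : Type*} [AddCommGroup M] [Module R M]

-- auxiliary lemmas

lemma mem_colon_top {N : Submodule R M} {r : R} : r ∈ N.colon ⊤ ↔ ∀ m : M, r • m ∈ N := by
  rw [Submodule.mem_colon]
  exact ⟨fun h m => h m trivial, fun h m _ => h m⟩

lemma smul_top_le_iff {I : Ideal R} {N : Submodule R M} :
    I • (⊤ : Submodule R M) ≤ N ↔ ∀ r ∈ I, ∀ m : M, r • m ∈ N := by
  rw [Submodule.smul_le]
  exact ⟨fun h r hr m => h r hr m trivial, fun h r hr m _ => h r hr m⟩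

lemma colon_top_smul_le {N : Submodule R M} : (N.colon ⊤) • (⊤ : Submodule R M) ≤ N :=
  smul_top_le_iff.2 fun r hr m => mem_colon_top.1 hr m

lemma eq_colon_smul (hmul : IsMultiplicationModule R M) (N : Submodule R M) :
    N = (N.colon ⊤) • (⊤ : Submodule R M) := by
  obtain ⟨I, hI⟩ := hmul N
  refine le_antisymm ?_ colon_top_smul_le
  have hIc : I ≤ N.colon ⊤ := fun r hr =>
    mem_colon_top.2 fun m => hI ▸ Submodule.smul_mem_smul hr trivial
  calc N = I • ⊤ := hI
    _ ≤ (N.colon ⊤) • ⊤ := Submodule.smul_mono_left hIc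

lemma prime_colon {P : Submodule R M} (hP : P.IsPrimeSubmodule) : (P.colon ⊤).IsPrime := by
  constructor
  · intro h
    have h1 : (1 : R) ∈ P.colon ⊤ := h ▸ Submodule.mem_top
    exact hP.1 (Submodule.eq_top_iff'.2 fun m => by simpa using mem_colon_top.1 h1 m)
  · intro r s h
    by_cases hs : s ∈ P.colon ⊤
    · exact Or.inr hs
    · left
      rw [mem_colon_top] at hs
      push_neg at hs
      obtain ⟨m, hm⟩ := hs
      have hmem : r • s • m ∈ P := by rw [smul_smul]; exact mem_colon_top.1 h m
      rcases hP.2 r (s • m) hmem with h' | h'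
      · exact absurd h' hm
      · exact h'

lemma nilpotent_eq_zero (hfaithful : (⊥ : Submodule R M).colon ⊤ = ⊥)
    (hred : IsReducedModule R M) {x : R} (hx : IsNilpotent x) : x = 0 := by
  obtain ⟨n, hn⟩ := hx
  rcases Nat.eq_zero_or_pos n with rfl | hpos
  · rw [pow_zero] at hn
    calc x = x * 1 := (mul_one x).symm
      _ = x * 0 := by rw [hn]
      _ = 0 := mul_zero x
  · -- x ∈ Q.colon ⊤ for every prime submodule Q
    have key : ∀ Q : Submodule R M, Q.IsPrimeSubmodule → x ∈ Q.colon ⊤ := by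
      intro Q hQ
      have step : ∀ k : ℕ, x ^ (k + 1) ∈ Q.colon ⊤ → x ∈ Q.colon ⊤ := by
        intro k
        induction k with
        | zero => rw [pow_one]; exact id
        | succ k ih =>
          intro h
          by_cases hxQ : x ∈ Q.colon ⊤
          · exact hxQ
          · apply ih
            rw [mem_colon_top]
            intro m
            have hm : x • (x ^ (k + 1) • m) ∈ Q := by
              rw [smul_smul, ← pow_succ']
              exact mem_colon_top.1 h m
            rcases hQ.2 x (x ^ (k + 1) • m) hm with h' | h'
            · exact h'
            · exact absurd h' hxQ
      obtain ⟨k, rfl⟩ := Nat.exists_eq_add_of_lt hpos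
      apply step (0 + k)
      rw [mem_colon_top]
      intro m
      rw [show (0 + k + 1) = k + 1 by omega] at hn ⊢
      rw [hn, zero_smul]
      exact Q.zero_mem
    have : x ∈ (⊥ : Submodule R M).colon ⊤ := by
      rw [mem_colon_top]
      intro m
      rw [Submodule.mem_bot, ← Submodule.mem_bot (R := R), ← hred]
      · exact Submodule.mem_sInf.2 fun Q hQ => mem_colon_top.1 (key Q hQ) m
    rw [hfaithful] at this
    exact Submodule.mem_bot _ |>.1 this

lemma minimal_prime_ann (hzero : ∀ x : R, IsNilpotent x → x = 0)
    {q : Ideal R} (hq : q ∈ minimalPrimes R) {x : R} (hx : x ∈ q) :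
    ∃ t, t ∉ q ∧ t * x = 0 := by
  have hqp : q.IsPrime := hq.1.1
  by_contra hcon
  push_neg at hcon
  set S : Submonoid R :=
    { carrier := {r | ∃ t, t ∉ q ∧ ∃ n : ℕ, r = t * x ^ n}
      mul_mem' := by
        rintro r r' ⟨t, ht, n, rfl⟩ ⟨t', ht', n', rfl⟩
        exact ⟨t * t', fun h => (hqp.mem_or_mem h).elim ht ht', n + n', by ring⟩
      one_mem' := ⟨1, fun h => hqp.ne_top (Ideal.eq_top_iff_one q |>.2 h), 0, by ring⟩ }
  have h0 : (0 : R) ∉ (S : Set R) := by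
    rintro ⟨t, ht, n, hn⟩
    have : IsNilpotent (t * x) := ⟨n + 1, by
      have : t * x ^ n = 0 := hn.symm
      calc (t * x) ^ (n + 1) = t * x ^ (n + 1) * t ^ n := by ring
        _ = (t * x ^ n) * x * t ^ n := by ring
        _ = 0 := by rw [this]; ring⟩
    exact hcon t ht (hzero _ this)
  obtain ⟨p, hp, -, hdisj⟩ := Ideal.exists_le_prime_disjoint (⊥ : Ideal R) S
    (by rw [Set.disjoint_left]; intro r hr; simp only [SetLike.mem_coe, Ideal.mem_bot] at hr; subst hr; exact h0)
  have hpq : p ≤ q := by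
    intro r hr
    by_contra hrq
    exact Set.disjoint_left.1 hdisj hr ⟨r, hrq, 0, by ring⟩
  have hqp' : q ≤ p := hq.2 ⟨hp, bot_le⟩ hpq
  exact Set.disjoint_left.1 hdisj (hqp' hx) ⟨1, fun h => hqp.ne_top (Ideal.eq_top_iff_one q |>.2 h), 1, by ring⟩

/-- In a faithful multiplication module: if `t • (s • m) = 0` with `t, s` outside a prime
ideal `q`, then `m ∈ q • ⊤`. -/
lemma mem_smul_of_kill (hfaithful : (⊥ : Submodule R M).colon ⊤ = ⊥)
    (hmul : IsMultiplicationModule R M) {q : Ideal R} (hqp : q.IsPrime)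
    {t s : R} {m : M} (h : t • s • m = 0) (ht : t ∉ q) (hs : s ∉ q) :
    m ∈ q • (⊤ : Submodule R M) := by
  obtain ⟨I, hI⟩ := hmul (Submodule.span R {m})
  have hIq : I ≤ q := by
    intro u hu
    have huM : ∀ m' : M, (t * s * u) • m' = 0 := by
      intro m'
      have : u • m' ∈ Submodule.span R {m} := hI ▸ Submodule.smul_mem_smul hu trivial
      obtain ⟨z, hz⟩ := Submodule.mem_span_singleton.1 this
      calc (t * s * u) • m' = (t * s) • (u • m') := by rw [mul_smul]
        _ = (t * s) • (z • m) := by rw [hz]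
        _ = z • ((t * s) • m) := smul_comm _ _ _
        _ = z • (t • s • m) := by rw [mul_smul]
        _ = 0 := by rw [h, smul_zero]
    have : t * s * u ∈ (⊥ : Submodule R M).colon ⊤ :=
      mem_colon_top.2 fun m' => Submodule.mem_bot _ |>.2 (huM m')
    rw [hfaithful, Ideal.mem_bot] at this
    have : t * s * u ∈ q := this ▸ q.zero_mem
    rcases hqp.mem_or_mem this with h' | h'
    · rcases hqp.mem_or_mem h' with h'' | h''
      · exact absurd h'' ht
      · exact absurd h'' hs
    · exact h'
  have : m ∈ Submodule.span R {m} := Submodule.mem_span_singleton_self m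
  rw [hI] at this
  exact Submodule.smul_mono_left hIq this

lemma colon_mem_minimalPrimes (hfaithful : (⊥ : Submodule R M).colon ⊤ = ⊥)
    (hmul : IsMultiplicationModule R M) (hred : IsReducedModule R M)
    {P : Submodule R M} (hP : P.IsMinimalPrime) : P.colon ⊤ ∈ minimalPrimes R := by
  have hzero : ∀ x : R, IsNilpotent x → x = 0 := fun x hx => nilpotent_eq_zero hfaithful hred hx
  have hpprime : (P.colon ⊤).IsPrime := prime_colon hP.1
  obtain ⟨q, hq, hqle⟩ := Ideal.exists_minimalPrimes_le (J := P.colon ⊤) bot_le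
  have hq' : q ∈ minimalPrimes R := hq
  have hqp : q.IsPrime := hq'.1.1
  have hRF : ∀ x ∈ q, ∃ t, t ∉ q ∧ t * x = 0 := fun x hx => minimal_prime_ann hzero hq' hx
  -- the torsion submodule at q
  set Q : Submodule R M :=
    { carrier := {m | ∃ t, t ∉ q ∧ t • m = 0}
      zero_mem' := ⟨1, fun h => hqp.ne_top (Ideal.eq_top_iff_one q |>.2 h), smul_zero 1⟩
      add_mem' := by
        rintro m m' ⟨t, ht, htm⟩ ⟨u, hu, hum⟩
        refine ⟨t * u, fun h => (hqp.mem_or_mem h).elim ht hu, ?_⟩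
        rw [smul_add]
        have h1 : (t * u) • m = 0 := by rw [mul_comm, mul_smul, htm, smul_zero]
        have h2 : (t * u) • m' = 0 := by rw [mul_smul, hum, smul_zero]
        rw [h1, h2, add_zero]
      smul_mem' := by
        rintro c m ⟨t, ht, htm⟩
        exact ⟨t, ht, by rw [smul_comm, htm, smul_zero]⟩ } with hQdef
  have hqMQ : q • (⊤ : Submodule R M) ≤ Q := by
    rw [smul_top_le_iff]
    intro x hx m
    obtain ⟨t, ht, htx⟩ := hRF x hx
    exact ⟨t, ht, by rw [smul_smul, htx, zero_smul]⟩
  have hqMP : q • (⊤ : Submodule R M) ≤ P :=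
    le_trans (Submodule.smul_mono_left hqle) colon_top_smul_le
  -- Q.colon ⊤ ≤ q
  have hcQq : Q.colon ⊤ ≤ q := by
    intro s hs
    by_contra hsq
    have htop : (⊤ : Submodule R M) ≤ q • ⊤ := by
      intro m _
      obtain ⟨t, ht, htsm⟩ := mem_colon_top.1 hs m
      exact mem_smul_of_kill hfaithful hmul hqp htsm ht hsq
    exact hP.1.1 (top_le_iff.1 (le_trans htop hqMP))
  have hQtop : Q ≠ ⊤ := by
    intro h
    apply hqp.ne_top
    rw [Ideal.eq_top_iff_one]
    apply hcQq
    exact mem_colon_top.2 fun m => h ▸ Submodule.mem_top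
  have hQprime : Q.IsPrimeSubmodule := by
    refine ⟨hQtop, fun r m hrm => ?_⟩
    by_cases hr : r ∈ q
    · right
      exact mem_colon_top.2 fun m' => hqMQ (Submodule.smul_mem_smul hr trivial)
    · left
      obtain ⟨t, ht, htrm⟩ := hrm
      rw [smul_smul, mul_comm, mul_smul] at htrm
      exact hqMQ (mem_smul_of_kill hfaithful hmul hqp htrm hr ht)
  have hQP : Q ≤ P := by
    calc Q = (Q.colon ⊤) • ⊤ := eq_colon_smul hmul Q
      _ ≤ q • ⊤ := Submodule.smul_mono_left hcQq
      _ ≤ P := hqMP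
  have hQeqP : Q = P := hP.2 Q hQprime hQP
  have hqcQ : q ≤ Q.colon ⊤ := fun x hx =>
    mem_colon_top.2 fun m => hqMQ (Submodule.smul_mem_smul hx trivial)
  have : P.colon ⊤ = q := by rw [← hQeqP]; exact le_antisymm hcQq hqcQ
  rw [this]
  exact hq'

theorem stmt1 (hfaithful : (⊥ : Submodule R M).colon ⊤ = ⊥)
    (hmul : IsMultiplicationModule R M) (hred : IsReducedModule R M) (a : R) :
    Vset ((Submodule.span R {a} : Ideal R).annihilator • (⊤ : Submodule R M)) =
      {P : Submodule R M | P.IsMinimalPrime} \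
        Vset (Ideal.span {a} • (⊤ : Submodule R M)) := by
  have hann : ∀ r : R, r ∈ (Submodule.span R {a} : Ideal R).annihilator ↔ r * a = 0 := by
    intro r
    rw [Submodule.mem_annihilator_span_singleton, smul_eq_mul]
  ext P
  simp only [Vset, Set.mem_setOf_eq, Set.mem_diff, Set.mem_setOf_eq]
  constructor
  · rintro ⟨hPmin, hannP⟩
    refine ⟨hPmin, fun h => ?_⟩
    obtain ⟨-, haP⟩ := h
    -- a ∈ P.colon ⊤
    have haC : a ∈ P.colon ⊤ :=
      mem_colon_top.2 fun m => smul_top_le_iff.1 haP a (Ideal.subset_span rfl) m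
    have hmin := colon_mem_minimalPrimes hfaithful hmul hred hPmin
    have hzero : ∀ x : R, IsNilpotent x → x = 0 :=
      fun x hx => nilpotent_eq_zero hfaithful hred hx
    obtain ⟨t, ht, hta⟩ := minimal_prime_ann hzero hmin haC
    apply ht
    exact mem_colon_top.2 fun m => smul_top_le_iff.1 hannP t ((hann t).2 hta) m
  · rintro ⟨hPmin, hnot⟩
    refine ⟨hPmin, ?_⟩
    have haP : ¬ (Ideal.span {a} • (⊤ : Submodule R M) ≤ P) := fun h => hnot ⟨hPmin, h⟩
    -- find m₀ with a • m₀ ∉ P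
    have : ∃ m : M, a • m ∉ P := by
      by_contra h
      push_neg at h
      apply haP
      rw [smul_top_le_iff]
      intro r hr m
      obtain ⟨z, hz⟩ := Submodule.mem_span_singleton.1 hr
      rw [← hz, smul_eq_mul, mul_smul]
      exact P.smul_mem z (h m)
    obtain ⟨m₀, hm₀⟩ := this
    rw [smul_top_le_iff]
    intro r hr m
    have hra : r * a = 0 := (hann r).1 hr
    have : r • (a • m₀) ∈ P := by
      rw [smul_smul, hra, zero_smul]; exact P.zero_mem
    rcases hPmin.1.2 r (a • m₀) this with h' | h'
    · exact absurd h' hm₀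
    · exact mem_colon_top.1 h' m
end

section
/- Let M be a faithful reduced multiplication R-module. Then for each a ∈ R, a minimal prime submodule P of M contains aM if and only if P contains (0 :_M Ann_R(aM)); i.e. V(aM) = V((0 :_M Ann_R(aM))). -/
variable {R : Type*} [CommRing R] {M : Type*} [AddCommGroup M] [Module R M]

/-! If `P` is a minimal prime submodule, then `(P :_R M)` is a minimal prime of the reduced ring
`R`: for a minimal prime `q ≤ (P :_R M)`, the `q`-torsion submodule `{m | ∃ s ∉ q, s • m = 0}` is
prime, and faithfulness together with the multiplication property puts it inside `q M ≤ P`, so it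
equals `P`. In a reduced ring every element `a` of a minimal prime `p` is killed by some `b ∉ p`;
such a `b` annihilates `aM`, and for `m ∈ (0 :_M Ann(aM))` primality of `P` applied to
`b • m = 0 ∈ P` gives `m ∈ P`. -/

theorem Ideal.exists_mul_eq_zero_of_mem_minimalPrimes [IsReduced R] {q : Ideal R}
    (hq : q ∈ minimalPrimes R) {r : R} (hr : r ∈ q) : ∃ t ∉ q, t * r = 0 := by
  have := hq.1.1
  have : Ring.KrullDimLE 0 (Localization.AtPrime q) := .of_isLocalization _ hq _
  have hr' : algebraMap R (Localization.AtPrime q) r = 0 := by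
    rw [← Ideal.mem_bot, ← Ideal.zero_eq_bot, ← nilradical_eq_zero,
      Ring.KrullDimLE.nilradical_eq_maximalIdeal, ← Localization.AtPrime.map_eq_maximalIdeal]
    exact Ideal.mem_map_of_mem _ hr
  obtain ⟨⟨t, htq⟩, ht⟩ := (IsLocalization.map_eq_zero_iff q.primeCompl _ r).mp hr'
  exact ⟨t, htq, ht⟩

namespace Submodule

variable {P : Submodule R M}

theorem IsPrimeSubmodule.colon_isPrime (hP : P.IsPrimeSubmodule) : (P.colon ⊤).IsPrime where
  ne_top' h := hP.1 <| eq_top_iff.2 fun m _ => (colon_eq_top_iff_subset _).1 h trivial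
  mem_or_mem' {r s} hrs := or_iff_not_imp_left.2 fun hr => mem_colon.2 fun m _ =>
    (hP.2 r (s • m) (by rw [← mul_smul]; exact mem_colon.1 hrs m trivial)).resolve_right hr

theorem IsPrimeSubmodule.pointAnn_le (hP : P.IsPrimeSubmodule) {J : Ideal R}
    (hJ : ¬J ≤ P.colon ⊤) : pointAnn J ≤ P := by
  obtain ⟨b, hbJ, hbP⟩ := SetLike.not_le_iff_exists.1 hJ
  intro m hm
  exact (hP.2 b m (by rw [hm b hbJ]; exact zero_mem P)).resolve_right hbP

theorem span_singleton_smul_top_le_iff {a : R} :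
    Ideal.span {a} • (⊤ : Submodule R M) ≤ P ↔ a ∈ P.colon ⊤ := by
  rw [ideal_span_singleton_smul, Set.top_eq_univ, ← top_coe (R := R), mem_colon_iff_le]

theorem mem_bot_colon_span_singleton_smul_top {a b : R} (hba : b * a = 0) :
    b ∈ (⊥ : Submodule R M).colon ((Ideal.span {a} • ⊤ : Submodule R M) : Set M) := by
  refine mem_colon.2 fun x hx => ?_
  rw [ideal_span_singleton_smul] at hx
  obtain ⟨y, -, rfl⟩ := (mem_smul_pointwise_iff_exists _ _ _).1 hx
  rw [smul_smul, hba, zero_smul]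
  exact zero_mem _

theorem le_pointAnn_bot_colon (N : Submodule R M) :
    N ≤ pointAnn ((⊥ : Submodule R M).colon (N : Set M)) :=
  fun m hm _ hj => (mem_bot R).1 (mem_colon.1 hj m hm)

theorem smul_top_le_of_le_colon {I : Ideal R} (h : I ≤ P.colon ⊤) : I • (⊤ : Submodule R M) ≤ P :=
  smul_le.2 fun _ hr m _ => mem_colon.1 (h hr) m trivial

section Torsion

variable {q : Ideal R}

theorem torsion'_primeCompl_le_smul_top (hfaithful : (⊥ : Submodule R M).colon ⊤ = ⊥)
    (hmul : IsMultiplicationModule R M) [q.IsPrime] :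
    torsion' R M q.primeCompl ≤ q • ⊤ := by
  rintro m ⟨⟨s, hs⟩, hsm : s • m = 0⟩
  obtain ⟨I, hI⟩ := hmul (span R {m})
  have hIq : I ≤ q := fun c hc => by
    have hsc : s * c ∈ (⊥ : Submodule R M).colon ⊤ := mem_colon.2 fun x _ => by
      obtain ⟨r, hr⟩ := mem_span_singleton.1 (hI ▸ smul_mem_smul hc trivial : c • x ∈ span R {m})
      rw [mul_smul, ← hr, smul_comm, hsm, smul_zero]
      exact zero_mem _
    rw [hfaithful, Ideal.mem_bot] at hsc
    exact (Ideal.IsPrime.mem_or_mem ‹_› (hsc ▸ q.zero_mem)).resolve_left hs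
  exact smul_mono_left hIq (hI ▸ mem_span_singleton_self m)

theorem smul_mem_torsion'_primeCompl_iff [q.IsPrime] {r : R} (hr : r ∉ q) {m : M} :
    r • m ∈ torsion' R M q.primeCompl ↔ m ∈ torsion' R M q.primeCompl :=
  ⟨fun ⟨⟨s, hs⟩, hsm⟩ =>
    ⟨⟨s * r, q.primeCompl.mul_mem hs hr⟩, by rwa [Submonoid.mk_smul, mul_smul]⟩, smul_mem _ r⟩

theorem colon_torsion'_primeCompl [IsReduced R] [q.IsPrime] (hq : q ∈ minimalPrimes R)
    (hne : torsion' R M q.primeCompl ≠ ⊤) : (torsion' R M q.primeCompl).colon ⊤ = q := by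
  ext r
  refine ⟨fun hr => by_contra fun hrq => hne ?_, fun hr => ?_⟩
  · exact eq_top_iff.2 fun m _ =>
      (smul_mem_torsion'_primeCompl_iff hrq).1 (mem_colon.1 hr m trivial)
  · obtain ⟨t, ht, htr⟩ := Ideal.exists_mul_eq_zero_of_mem_minimalPrimes hq hr
    exact mem_colon.2 fun m _ => ⟨⟨t, ht⟩, show t • r • m = 0 by rw [smul_smul, htr, zero_smul]⟩

theorem isPrimeSubmodule_torsion'_primeCompl [IsReduced R] [q.IsPrime] (hq : q ∈ minimalPrimes R)
    (hne : torsion' R M q.primeCompl ≠ ⊤) : (torsion' R M q.primeCompl).IsPrimeSubmodule := by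
  refine ⟨hne, fun r m hrm => ?_⟩
  rw [colon_torsion'_primeCompl hq hne]
  exact or_iff_not_imp_right.2 fun hr => (smul_mem_torsion'_primeCompl_iff hr).1 hrm

end Torsion

theorem IsMinimalPrime.colon_mem_minimalPrimes (hfaithful : (⊥ : Submodule R M).colon ⊤ = ⊥)
    (hmul : IsMultiplicationModule R M) [IsReduced R] (hP : P.IsMinimalPrime) :
    P.colon ⊤ ∈ minimalPrimes R := by
  have := hP.1.colon_isPrime
  obtain ⟨q, hq, hqP⟩ := Ideal.exists_minimalPrimes_le (bot_le : ⊥ ≤ P.colon ⊤)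
  have := hq.1.1
  have hle : torsion' R M q.primeCompl ≤ P :=
    (torsion'_primeCompl_le_smul_top hfaithful hmul).trans (smul_top_le_of_le_colon hqP)
  have hne : torsion' R M q.primeCompl ≠ ⊤ := ne_top_of_le_ne_top hP.1.1 hle
  rwa [← hP.2 _ (isPrimeSubmodule_torsion'_primeCompl hq hne) hle, colon_torsion'_primeCompl hq hne]

end Submodule

open Submodule

theorem IsReducedModule.isReduced (hfaithful : (⊥ : Submodule R M).colon ⊤ = ⊥)
    (hred : IsReducedModule R M) : IsReduced R where
  eq_zero x := fun ⟨n, hn⟩ => by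
    have hx : x ∈ (⊥ : Submodule R M).colon ⊤ := mem_colon.2 fun m _ => by
      rw [← hred]
      refine mem_sInf.2 fun P hP => mem_colon.1 (hP.colon_isPrime.mem_of_pow_mem n ?_) m trivial
      rw [hn]
      exact zero_mem _
    rwa [hfaithful] at hx

theorem stmt3 (hfaithful : (⊥ : Submodule R M).colon ⊤ = ⊥)
    (hmul : IsMultiplicationModule R M) (hred : IsReducedModule R M) (a : R) :
    Vset (Ideal.span {a} • (⊤ : Submodule R M)) =
      Vset (pointAnn ((⊥ : Submodule R M).colon ((Ideal.span {a} • (⊤ : Submodule R M) : Submodule R M) : Set M))) := by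
  have := IsReducedModule.isReduced hfaithful hred
  ext P
  refine ⟨fun ⟨hP, haP⟩ => ⟨hP, ?_⟩, fun ⟨hP, hle⟩ => ⟨hP, (le_pointAnn_bot_colon _).trans hle⟩⟩
  obtain ⟨b, hbP, hba⟩ := Ideal.exists_mul_eq_zero_of_mem_minimalPrimes
    (hP.colon_mem_minimalPrimes hfaithful hmul) (span_singleton_smul_top_le_iff.1 haP)
  exact hP.1.pointAnn_le fun h => hbP (h (mem_bot_colon_span_singleton_smul_top hba))
end

section
/- Let M be a reduced multiplication R-module. Then for any ideals I and J of R, (0 :_M Ann_R(IJM)) = (0 :_M Ann_R(IM)) ∩ (0 :_M Ann_R(JM)). -/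
variable {R : Type*} [CommRing R] {M : Type*} [AddCommGroup M] [Module R M]

/-!
Suppose `ann (IM)` and `ann (JM)` lie in `ann N`, and let `c ∈ ann (IJM)`. Write `N = KM`; then
`ann N · K ⊆ ann M`, so `cI ⊆ ann (JM) ⊆ ann N`, hence `cKI ⊆ ann M`, i.e. `cK ⊆ ann (IM) ⊆ ann N`,
and so `(cK)² ⊆ cK · K ⊆ ann N · K ⊆ ann M`. Since `M` is reduced, `ann M` is a radical ideal,
so `cK ⊆ ann M` and `c` kills `KM = N`. For `N = Rm` this is the theorem.
-/

open Submodule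

lemma IsReducedModule.smul_eq_zero_of_smul_smul_eq_zero (hred : IsReducedModule R M) {r : R}
    {x : M} (h : r • r • x = 0) : r • x = 0 := by
  have hmem : r • x ∈ sInf {P : Submodule R M | P.IsPrimeSubmodule} := by
    rw [mem_sInf]
    intro P hP
    rcases hP.2 r (r • x) (h ▸ P.zero_mem) with hx | hr
    · exact hx
    · exact mem_colon.mp hr x trivial
  rwa [hred, mem_bot] at hmem

lemma IsReducedModule.le_annihilator_of_mul_self_le (hred : IsReducedModule R M) {L : Ideal R}
    {N : Submodule R M} (h : L * L ≤ N.annihilator) : L ≤ N.annihilator := fun r hr =>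
  mem_annihilator.mpr fun n hn => hred.smul_eq_zero_of_smul_smul_eq_zero <| by
    rw [smul_smul]
    exact mem_annihilator.mp (h (Ideal.mul_mem_mul hr hr)) n hn

lemma le_annihilator_smul_iff {L I : Ideal R} {N : Submodule R M} :
    L ≤ (I • N).annihilator ↔ L * I ≤ N.annihilator := by
  rw [le_annihilator_iff, le_annihilator_iff, Submodule.mul_smul]

lemma annihilator_mul_le_annihilator_top {K : Ideal R} {N : Submodule R M}
    (hN : N = K • ⊤) : N.annihilator * K ≤ (⊤ : Submodule R M).annihilator :=
  le_annihilator_smul_iff.mp (hN ▸ le_rfl)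

theorem annihilator_mul_smul_top_le (hmul : IsMultiplicationModule R M)
    (hred : IsReducedModule R M) {I J : Ideal R} {N : Submodule R M}
    (hI : (I • ⊤ : Submodule R M).annihilator ≤ N.annihilator)
    (hJ : (J • ⊤ : Submodule R M).annihilator ≤ N.annihilator) :
    ((I * J) • ⊤ : Submodule R M).annihilator ≤ N.annihilator := by
  set C := ((I * J) • ⊤ : Submodule R M).annihilator with hC
  obtain ⟨K, hK⟩ := hmul N
  have hNK := annihilator_mul_le_annihilator_top hK
  have hCI : C * I ≤ N.annihilator := by
    rw [Submodule.mul_smul] at hC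
    exact (le_annihilator_smul_iff.mp hC.le).trans hJ
  have hCK : C * K ≤ N.annihilator := by
    refine (le_annihilator_smul_iff.mpr ?_).trans hI
    rw [mul_right_comm]
    exact (Ideal.mul_mono_left hCI).trans hNK
  have hCK_top : C * K ≤ (⊤ : Submodule R M).annihilator :=
    hred.le_annihilator_of_mul_self_le <| calc
      C * K * (C * K) ≤ C * K * K := Ideal.mul_mono_right Ideal.mul_le_right
      _ ≤ N.annihilator * K := Ideal.mul_mono_left hCK
      _ ≤ _ := hNK
  exact hK ▸ le_annihilator_smul_iff.mpr hCK_top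

lemma mem_pointAnn_iff {J : Ideal R} {m : M} :
    m ∈ pointAnn J ↔ J ≤ (R ∙ m).annihilator :=
  forall₂_congr fun j _ => (mem_annihilator_span_singleton m j).symm

theorem stmt4 (hmul : IsMultiplicationModule R M) (hred : IsReducedModule R M)
    (I J : Ideal R) :
    pointAnn (M := M) ((⊥ : Submodule R M).colon ((((I * J : Ideal R)) • (⊤ : Submodule R M) : Submodule R M))) =
      pointAnn (M := M) ((⊥ : Submodule R M).colon ((I • (⊤ : Submodule R M) : Submodule R M))) ⊓
        pointAnn (M := M) ((⊥ : Submodule R M).colon ((J • (⊤ : Submodule R M) : Submodule R M))) := by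
  simp only [bot_colon]
  ext m
  simp only [mem_inf, mem_pointAnn_iff]
  constructor
  · intro h
    exact ⟨(annihilator_mono (smul_mono_left Ideal.mul_le_left)).trans h,
      (annihilator_mono (smul_mono_left Ideal.mul_le_right)).trans h⟩
  · rintro ⟨hI, hJ⟩
    exact annihilator_mul_smul_top_le hmul hred hI hJ
end

section
/- Let M be a reduced multiplication R-module and N a submodule. Then the following are equivalent: (a) for all a, b ∈ R, if Ann_R(aM) = Ann_R(bM) and aM ⊆ N then bM ⊆ N; (b) for all a, b ∈ R, if Ann_R(aM) ⊆ Ann_R(bM) and aM ⊆ N then bM ⊆ N. -/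
variable {R : Type*} [CommRing R] {M : Type*} [AddCommGroup M] [Module R M]

/-!
In a reduced module the annihilator of `M` is a radical ideal. Hence if `Ann(aM) ⊆ Ann(bM)`
then `Ann(abM) = Ann(bM)`: from `r·ab·M = 0` we get `rb ∈ Ann(aM) ⊆ Ann(bM)`, so `(rb)² M = 0`
and thus `rb·M = 0`. Since `abM ⊆ aM ⊆ N`, condition (a) applied to `ab` and `b` gives (b).
-/

theorem IsReducedModule.isRadical_annihilator (hred : IsReducedModule R M) :
    (Module.annihilator R M).IsRadical := by
  refine (Ideal.isRadical_iff_pow_one_lt 2 one_lt_two).2 fun s hs => Module.mem_annihilator.2 ?_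
  intro m
  have hmem : s • m ∈ sInf {P : Submodule R M | P.IsPrimeSubmodule} := by
    refine Submodule.mem_sInf.2 fun P hP => ?_
    have hssm : s • s • m ∈ P := by
      rw [smul_smul, ← sq, Module.mem_annihilator.1 hs m]
      exact P.zero_mem
    exact (hP.2 s (s • m) hssm).elim id fun hs' => Submodule.mem_colon.1 hs' m trivial
  rwa [hred, Submodule.mem_bot] at hmem

theorem Submodule.bot_colon_span_singleton_smul_top (c : R) :
    (⊥ : Submodule R M).colon ((Ideal.span {c} • (⊤ : Submodule R M) : Submodule R M) : Set M) =
      (Module.annihilator R M).colon (Ideal.span {c}) := by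
  ext r
  rw [Submodule.bot_colon, Submodule.ideal_span_singleton_smul, Submodule.mem_annihilator,
    Ideal.mem_colon_span_singleton, Module.mem_annihilator]
  simp only [Submodule.mem_smul_pointwise_iff_exists, Submodule.mem_top, true_and,
    forall_exists_index, forall_apply_eq_imp_iff, mul_smul]

theorem Ideal.IsRadical.colon_span_singleton_mul_eq {I : Ideal R} (hI : I.IsRadical) {a b : R}
    (hab : I.colon (Ideal.span {a}) ≤ I.colon (Ideal.span {b})) :
    I.colon (Ideal.span {a * b}) = I.colon (Ideal.span {b}) := by
  refine le_antisymm (fun r hr => ?_) (fun r hr => ?_) <;>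
    rw [Ideal.mem_colon_span_singleton] at hr ⊢
  · have hrbb : r * b * b ∈ I :=
      Ideal.mem_colon_span_singleton.1 <| hab <| Ideal.mem_colon_span_singleton.2 <| by
        rwa [mul_right_comm, mul_assoc]
    have hsq : (r * b) ^ 2 = r * (r * b * b) := by ring
    exact hI ⟨2, hsq ▸ I.mul_mem_left r hrbb⟩
  · rw [mul_left_comm]
    exact I.mul_mem_left a hr

theorem stmt6_general (hred : IsReducedModule R M)
    (N : Submodule R M) :
    (∀ a b : R,
        (⊥ : Submodule R M).colon ((Ideal.span {a} • (⊤ : Submodule R M) : Submodule R M) : Set M) =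
          (⊥ : Submodule R M).colon ((Ideal.span {b} • (⊤ : Submodule R M) : Submodule R M) : Set M) →
        Ideal.span {a} • (⊤ : Submodule R M) ≤ N →
        Ideal.span {b} • (⊤ : Submodule R M) ≤ N) ↔
      (∀ a b : R,
        (⊥ : Submodule R M).colon ((Ideal.span {a} • (⊤ : Submodule R M) : Submodule R M) : Set M) ≤
          (⊥ : Submodule R M).colon ((Ideal.span {b} • (⊤ : Submodule R M) : Submodule R M) : Set M) →
        Ideal.span {a} • (⊤ : Submodule R M) ≤ N →
        Ideal.span {b} • (⊤ : Submodule R M) ≤ N) := by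
  simp only [Submodule.bot_colon_span_singleton_smul_top]
  refine ⟨fun h a b hab haN => ?_, fun h a b hab => h a b hab.le⟩
  have habN : Ideal.span {a * b} • (⊤ : Submodule R M) ≤ N :=
    (Submodule.smul_mono_left (Ideal.span_singleton_le_span_singleton.2 (dvd_mul_right a b))).trans
      haN
  exact h (a * b) b (hred.isRadical_annihilator.colon_span_singleton_mul_eq hab) habN

theorem stmt6 (hmul : IsMultiplicationModule R M) (hred : IsReducedModule R M)
    (N : Submodule R M) :
    (∀ a b : R,
        (⊥ : Submodule R M).colon ((Ideal.span {a} • (⊤ : Submodule R M) : Submodule R M) : Set M) =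
          (⊥ : Submodule R M).colon ((Ideal.span {b} • (⊤ : Submodule R M) : Submodule R M) : Set M) →
        Ideal.span {a} • (⊤ : Submodule R M) ≤ N →
        Ideal.span {b} • (⊤ : Submodule R M) ≤ N) ↔
      (∀ a b : R,
        (⊥ : Submodule R M).colon ((Ideal.span {a} • (⊤ : Submodule R M) : Submodule R M) : Set M) ≤
          (⊥ : Submodule R M).colon ((Ideal.span {b} • (⊤ : Submodule R M) : Submodule R M) : Set M) →
        Ideal.span {a} • (⊤ : Submodule R M) ≤ N →
        Ideal.span {b} • (⊤ : Submodule R M) ≤ N) :=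
  stmt6_general hred N
end

section
/- Let M be a cyclic R-module and N a proper submodule. Then N is a z°-submodule of M (i.e. 𝔓_x ⊆ N for every x ∈ N, where 𝔓_x is the intersection of all minimal prime submodules containing x) if and only if N is a quasi z°-submodule of M (i.e. 𝔓_{aM} ⊆ N for every a ∈ (N :_R M)). -/
variable {R : Type*} [CommRing R] {M : Type*} [AddCommGroup M] [Module R M]

/-- A `z°`-submodule. -/
def IsZSubmodule (N : Submodule R M) : Prop :=
  N ≠ ⊤ ∧ ∀ x ∈ N, sInf {P : Submodule R M | P.IsMinimalPrime ∧ x ∈ P} ≤ N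

/-! If `M = R g`, then `a ∈ (N :_R M)` iff `a g ∈ N`, and `a M = R (a g)`, so `𝔓_{aM} = 𝔓_{ag}`.
As `a` runs over `R`, `a g` runs over `M`, so both conditions quantify over the same family. -/

namespace Submodule

theorem ideal_span_singleton_smul_top_eq_span_smul {g : M} (hg : span R {g} = ⊤) (a : R) :
    Ideal.span {a} • (⊤ : Submodule R M) = span R {a • g} := by
  rw [ideal_span_singleton_smul, ← hg, smul_span, Set.smul_set_singleton]

theorem mem_colon_univ_iff_smul_mem {g : M} (hg : span R {g} = ⊤) {N : Submodule R M} {a : R} :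
    a ∈ N.colon Set.univ ↔ a • g ∈ N := by
  rw [← top_coe (R := R), ← hg, mem_colon_span_singleton]

end Submodule

open Submodule

theorem primeRad_span_singleton (x : M) :
    primeRad (span R {x}) = sInf {P : Submodule R M | P.IsMinimalPrime ∧ x ∈ P} := by
  simp only [primeRad, span_singleton_le_iff_mem]

theorem stmt8_general (hcyc : ∃ x : M, Submodule.span R {x} = ⊤)
    (N : Submodule R M) :
    IsZSubmodule N ↔ IsQuasiZSubmodule N := by
  obtain ⟨g, hg⟩ := hcyc
  have hrad (a : R) : primeRad (Ideal.span {a} • (⊤ : Submodule R M)) =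
      sInf {P : Submodule R M | P.IsMinimalPrime ∧ a • g ∈ P} := by
    rw [ideal_span_singleton_smul_top_eq_span_smul hg, primeRad_span_singleton]
  refine ⟨fun ⟨hN, hz⟩ => ⟨hN, fun a ha => ?_⟩, fun ⟨hN, hq⟩ => ⟨hN, fun x hx => ?_⟩⟩
  · rw [hrad]
    exact hz _ ((mem_colon_univ_iff_smul_mem hg).mp ha)
  · obtain ⟨a, rfl⟩ := mem_span_singleton.mp (hg ▸ mem_top : x ∈ span R {g})
    rw [← hrad]
    exact hq a ((mem_colon_univ_iff_smul_mem hg).mpr hx)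

theorem stmt8 (hcyc : ∃ x : M, Submodule.span R {x} = ⊤)
    (N : Submodule R M) (hN : N ≠ ⊤) :
    IsZSubmodule N ↔ IsQuasiZSubmodule N :=
  stmt8_general hcyc N
end

section
/- Let M be a faithful cyclic R-module. Then a proper submodule N of M is a z°-submodule of M if and only if (N :_R M) is a z°-ideal of R. -/
variable {R : Type*} [CommRing R] {M : Type*} [AddCommGroup M] [Module R M]

section aux
variable (e : R ≃ₗ[R] M)

lemma aux_colon_top_eq (N : Submodule R M) :
    N.colon ⊤ = N.comap (e : R →ₗ[R] M) := by
  ext r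
  rw [Submodule.mem_colon]
  constructor
  · intro h
    have h1 := h (e 1) trivial
    rwa [← map_smul, smul_eq_mul, mul_one] at h1
  · intro h m _
    obtain ⟨s, rfl⟩ := e.surjective m
    have : r • e s = s • e r := by
      rw [← map_smul, ← map_smul, smul_eq_mul, smul_eq_mul, mul_comm]
    rw [this]
    exact N.smul_mem s h

lemma aux_top_iff (P : Submodule R M) :
    P.comap (e : R →ₗ[R] M) = ⊤ ↔ P = ⊤ := by
  constructor
  · intro h
    rw [Submodule.eq_top_iff']
    intro m
    obtain ⟨s, rfl⟩ := e.surjective m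
    have : s ∈ P.comap (e : R →ₗ[R] M) := h ▸ trivial
    exact this
  · rintro rfl; simp

lemma aux_smul (r s : R) : e (r * s) = r • e s := by
  rw [← smul_eq_mul, map_smul]

lemma aux_prime_iff (P : Submodule R M) :
    P.IsPrimeSubmodule ↔ Ideal.IsPrime (P.comap (e : R →ₗ[R] M)) := by
  constructor
  · rintro ⟨hne, hp⟩
    refine ⟨fun h => hne ((aux_top_iff e P).mp h), ?_⟩
    intro r s hrs
    have : r • e s ∈ P := aux_smul e r s ▸ hrs
    rcases hp r (e s) this with h | h
    · exact Or.inr h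
    · rw [aux_colon_top_eq e P] at h
      exact Or.inl h
  · rintro ⟨hne, hp⟩
    refine ⟨fun h => hne (by rw [h]; simp), ?_⟩
    intro r m hrm
    obtain ⟨s, rfl⟩ := e.surjective m
    have : r * s ∈ P.comap (e : R →ₗ[R] M) := by
      show e (r * s) ∈ P
      rwa [aux_smul]
    rcases hp this with h | h
    · right; rwa [aux_colon_top_eq e P]
    · left; exact h

end aux

section aux2
variable (e : R ≃ₗ[R] M)

lemma aux_min_iff (P : Submodule R M) :
    P.IsMinimalPrime ↔ P.comap (e : R →ₗ[R] M) ∈ minimalPrimes R := by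
  rw [minimalPrimes_eq_minimals]
  constructor
  · rintro ⟨hp, hmin⟩
    refine ⟨(aux_prime_iff e P).mp hp, ?_⟩
    intro q hq hle
    have hc : (Submodule.map (e : R →ₗ[R] M) q).comap (e : R →ₗ[R] M) = q :=
      Submodule.comap_map_eq_of_injective e.injective q
    have hQp : (Submodule.map (e : R →ₗ[R] M) q).IsPrimeSubmodule :=
      (aux_prime_iff e _).mpr (by rwa [hc])
    have hQle : Submodule.map (e : R →ₗ[R] M) q ≤ P :=
      Submodule.map_le_iff_le_comap.mpr hle
    have := hmin _ hQp hQle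
    rw [← this, hc]
  · rintro ⟨hq, hmin⟩
    refine ⟨(aux_prime_iff e P).mpr hq, ?_⟩
    intro Q hQ hle
    have h1 : P.comap (e : R →ₗ[R] M) ≤ Q.comap (e : R →ₗ[R] M) :=
      hmin ((aux_prime_iff e Q).mp hQ) (Submodule.comap_mono hle)
    exact le_antisymm hle
      ((Submodule.comap_le_comap_iff_of_surjective e.surjective).mp h1)

lemma aux_image (a : R) :
    Submodule.map (e : R →ₗ[R] M) ''
        {p : Ideal R | p ∈ minimalPrimes R ∧ Ideal.span {a} ≤ p}
      = {P : Submodule R M | P.IsMinimalPrime ∧ e a ∈ P} := by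
  ext P
  simp only [Set.mem_image, Set.mem_setOf_eq]
  constructor
  · rintro ⟨p, ⟨hmin, hle⟩, rfl⟩
    have hc : (Submodule.map (e : R →ₗ[R] M) p).comap (e : R →ₗ[R] M) = p :=
      Submodule.comap_map_eq_of_injective e.injective p
    refine ⟨(aux_min_iff e _).mpr (by rwa [hc]), ?_⟩
    exact Submodule.mem_map_of_mem (hle (Ideal.mem_span_singleton_self a))
  · rintro ⟨hmin, hmem⟩
    exact ⟨P.comap (e : R →ₗ[R] M),
      ⟨(aux_min_iff e P).mp hmin, (Ideal.span_singleton_le_iff_mem _).mpr hmem⟩,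
      Submodule.map_comap_eq_of_surjective e.surjective P⟩

lemma aux_map_sInf (S : Set (Ideal R)) :
    Submodule.map (e : R →ₗ[R] M) (sInf S)
      = sInf (Submodule.map (e : R →ₗ[R] M) '' S) := by
  rw [sInf_image]
  exact (Submodule.orderIsoMapComap e).map_sInf S

end aux2

theorem stmt13 (hfaithful : (⊥ : Submodule R M).colon ⊤ = ⊥)
    (hcyc : ∃ x : M, Submodule.span R {x} = ⊤)
    (N : Submodule R M) (hN : N ≠ ⊤) :
    IsZSubmodule N ↔ IsZIdeal (N.colon ⊤) := by
  obtain ⟨x, hx⟩ := hcyc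
  have hinj : Function.Injective (LinearMap.toSpanSingleton R M x) := by
    rw [injective_iff_map_eq_zero]
    intro r hr
    have hrb : r ∈ (⊥ : Submodule R M).colon ⊤ := by
      rw [Submodule.mem_colon]
      intro m _
      have hm : m ∈ Submodule.span R {x} := hx ▸ Submodule.mem_top
      obtain ⟨s, rfl⟩ := Submodule.mem_span_singleton.mp hm
      rw [smul_comm r s x, show r • x = 0 from hr, smul_zero]
      exact Submodule.zero_mem ⊥
    rw [hfaithful] at hrb
    exact hrb
  have hsurj : Function.Surjective (LinearMap.toSpanSingleton R M x) := by
    rw [← LinearMap.range_eq_top, ← LinearMap.span_singleton_eq_range, hx]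
  let e : R ≃ₗ[R] M := LinearEquiv.ofBijective _ ⟨hinj, hsurj⟩
  constructor
  · rintro ⟨-, hz⟩
    refine ⟨?_, ?_⟩
    · rw [aux_colon_top_eq e N]
      intro h
      exact hN ((aux_top_iff e N).mp h)
    · intro a ha
      have hea : e a ∈ N := by rw [aux_colon_top_eq e N] at ha; exact ha
      rw [aux_colon_top_eq e N]
      show sInf {p : Ideal R | p ∈ minimalPrimes R ∧ Ideal.span {a} ≤ p} ≤ _
      rw [← Submodule.map_le_iff_le_comap, aux_map_sInf, aux_image]
      exact hz (e a) hea
  · rintro ⟨-, hz⟩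
    refine ⟨hN, ?_⟩
    intro m hm
    obtain ⟨a, rfl⟩ := e.surjective m
    have ha : a ∈ N.colon ⊤ := by rw [aux_colon_top_eq e N]; exact hm
    have h1 := hz a ha
    rw [aux_colon_top_eq e N] at h1
    have h2 : Submodule.map (e : R →ₗ[R] M) (idealPrimeRad (Ideal.span {a})) ≤ N :=
      Submodule.map_le_iff_le_comap.mpr h1
    rw [show idealPrimeRad (Ideal.span {a})
          = sInf {p : Ideal R | p ∈ minimalPrimes R ∧ Ideal.span {a} ≤ p} from rfl,
        aux_map_sInf, aux_image] at h2
    exact h2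
end

section
/- Every proper submodule of a faithful reduced multiplication R-module M that is also a comultiplication module is a quasi z°-submodule of M. -/
/-!
Write `aM = (0 :_M J)` using the comultiplication property. If `x` lies in every minimal prime
submodule containing `aM` and `j ∈ J`, then `j • x` lies in every minimal prime submodule `Q`:
either `aM ≤ Q`, or some `k ∈ (0 :_M J) \ Q` gives `j • k = 0 ∈ Q`, so `j` kills `M` modulo `Q`.
Every prime submodule contains a minimal one (Zorn), so `j • x` lies in the intersection of all
prime submodules, which is `0` as `M` is reduced. Hence `x ∈ (0 :_M J) = aM ≤ N`.
-/

variable {R : Type*} [CommRing R] {M : Type*} [AddCommGroup M] [Module R M]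

namespace Submodule.IsPrimeSubmodule

theorem mem_colon_of_smul_mem {P : Submodule R M} (hP : P.IsPrimeSubmodule) {r : R} {m : M}
    (hrm : r • m ∈ P) (hm : m ∉ P) : r ∈ P.colon ⊤ :=
  (hP.2 r m hrm).resolve_left hm

theorem sInf_of_isChain {c : Set (Submodule R M)} (hc : IsChain (· ≤ ·) c) (hne : c.Nonempty)
    (hprime : ∀ P ∈ c, P.IsPrimeSubmodule) : (sInf c).IsPrimeSubmodule := by
  obtain ⟨P₀, hP₀⟩ := hne
  refine ⟨ne_top_of_le_ne_top (hprime P₀ hP₀).1 (sInf_le hP₀), fun r m hrm => ?_⟩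
  by_cases hm : m ∈ sInf c
  · exact Or.inl hm
  right
  obtain ⟨Pj, hPj, hmPj⟩ := not_forall₂.1 (mt Submodule.mem_sInf.2 hm)
  refine Submodule.mem_colon.2 fun n _ => Submodule.mem_sInf.2 fun Pi hPi => ?_
  have hrm' : ∀ P ∈ c, r • m ∈ P := Submodule.mem_sInf.1 hrm
  rcases hc.total hPi hPj with hij | hji
  · exact Submodule.mem_colon.1
      ((hprime Pi hPi).mem_colon_of_smul_mem (hrm' Pi hPi) fun h => hmPj (hij h)) n trivial
  · exact hji (Submodule.mem_colon.1
      ((hprime Pj hPj).mem_colon_of_smul_mem (hrm' Pj hPj) hmPj) n trivial)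

theorem exists_isMinimalPrime_le {P : Submodule R M} (hP : P.IsPrimeSubmodule) :
    ∃ Q : Submodule R M, Q.IsMinimalPrime ∧ Q ≤ P := by
  obtain ⟨Q, hQP, hQ⟩ := zorn_le_nonempty₀ (α := (Submodule R M)ᵒᵈ)
    {Q | (OrderDual.ofDual Q).IsPrimeSubmodule}
    (fun c hc hchain y hy => ⟨OrderDual.toDual (sInf c),
      sInf_of_isChain hchain.symm ⟨y, hy⟩ hc, fun _ hz => sInf_le (α := Submodule R M) hz⟩)
    (OrderDual.toDual P) hP
  exact ⟨OrderDual.ofDual Q, ⟨hQ.1, fun Q' hQ' hle => le_antisymm hle (hQ.2 hQ' hle)⟩, hQP⟩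

theorem mem_colon_of_not_pointAnn_le {Q : Submodule R M} (hQ : Q.IsPrimeSubmodule)
    {J : Ideal R} (hJQ : ¬ pointAnn J ≤ Q) {j : R} (hj : j ∈ J) : j ∈ Q.colon ⊤ := by
  obtain ⟨k, hk, hkQ⟩ := SetLike.not_le_iff_exists.1 hJQ
  exact hQ.mem_colon_of_smul_mem (by rw [hk j hj]; exact Q.zero_mem) hkQ

end Submodule.IsPrimeSubmodule

theorem smul_mem_of_mem_primeRad_pointAnn {J : Ideal R} {x : M}
    (hx : x ∈ primeRad (pointAnn J : Submodule R M)) {j : R} (hj : j ∈ J)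
    {P : Submodule R M} (hP : P.IsPrimeSubmodule) : j • x ∈ P := by
  obtain ⟨Q, hQ, hQP⟩ := hP.exists_isMinimalPrime_le
  by_cases hJQ : pointAnn J ≤ Q
  · exact hQP (Q.smul_mem j (Submodule.mem_sInf.1 hx Q ⟨hQ, hJQ⟩))
  · exact hQP (Submodule.mem_colon.1 (hQ.1.mem_colon_of_not_pointAnn_le hJQ hj) x trivial)

theorem primeRad_pointAnn_le (hred : IsReducedModule R M) (J : Ideal R) :
    primeRad (pointAnn J : Submodule R M) ≤ pointAnn J := by
  intro x hx j hj
  have hjx : j • x ∈ sInf {P : Submodule R M | P.IsPrimeSubmodule} :=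
    Submodule.mem_sInf.2 fun _ hP => smul_mem_of_mem_primeRad_pointAnn hx hj hP
  rwa [hred, Submodule.mem_bot] at hjx

theorem span_singleton_smul_top_le {N : Submodule R M} {a : R} (ha : a ∈ N.colon ⊤) :
    Ideal.span {a} • (⊤ : Submodule R M) ≤ N :=
  Submodule.smul_le.2 fun _ hr n _ =>
    Submodule.mem_colon.1 ((Ideal.span_singleton_le_iff_mem _).2 ha hr) n trivial

theorem stmt16_general (hred : IsReducedModule R M)
    (hcomul : ∀ N : Submodule R M, ∃ I : Ideal R, N = pointAnn I)
    (N : Submodule R M) (hN : N ≠ ⊤) :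
    IsQuasiZSubmodule N := by
  refine ⟨hN, fun a ha => ?_⟩
  obtain ⟨J, hJ⟩ := hcomul (Ideal.span {a} • ⊤)
  calc primeRad (Ideal.span {a} • ⊤) = primeRad (pointAnn J : Submodule R M) := by rw [hJ]
    _ ≤ pointAnn J := primeRad_pointAnn_le hred J
    _ = Ideal.span {a} • ⊤ := hJ.symm
    _ ≤ N := span_singleton_smul_top_le ha

theorem stmt16 (hfaithful : (⊥ : Submodule R M).colon ⊤ = ⊥)
    (hmul : IsMultiplicationModule R M) (hred : IsReducedModule R M)
    (hcomul : ∀ N : Submodule R M, ∃ I : Ideal R, N = pointAnn I)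
    (N : Submodule R M) (hN : N ≠ ⊤) :
    IsQuasiZSubmodule N :=
  stmt16_general hred hcomul N hN
end

section
/- Let M be a faithful reduced multiplication R-module. Then every maximal element (with respect to inclusion) of the set of quasi z°-submodules of M is a prime submodule of M. -/
variable {R : Type*} [CommRing R] {M : Type*} [AddCommGroup M] [Module R M]

lemma span_smul_top_le_iff (s : R) (P : Submodule R M) :
    Ideal.span {s} • (⊤ : Submodule R M) ≤ P ↔ ∀ m : M, s • m ∈ P := by
  constructor
  · intro h m
    exact h (Submodule.smul_mem_smul (Ideal.mem_span_singleton_self s) trivial)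
  · intro h
    rw [Submodule.smul_le]
    intro t ht n _
    obtain ⟨c, rfl⟩ := Ideal.mem_span_singleton'.mp ht
    rw [mul_smul]
    exact P.smul_mem c (h n)

theorem stmt18 (hfaithful : (⊥ : Submodule R M).colon ⊤ = ⊥)
    (hmul : IsMultiplicationModule R M) (hred : IsReducedModule R M)
    (N : Submodule R M) (hN : IsQuasiZSubmodule N)
    (hmax : ∀ K : Submodule R M, IsQuasiZSubmodule K → N ≤ K → K = N) :
    N.IsPrimeSubmodule := by
  refine ⟨hN.1, fun r m hrm => ?_⟩
  by_cases hr : r ∈ N.colon ⊤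
  · exact Or.inr hr
  left
  set C : Submodule R M := N.comap (LinearMap.lsmul R M r) with hCdef
  have hmemC : ∀ x : M, x ∈ C ↔ r • x ∈ N := fun x => Iff.rfl
  have hNC : N ≤ C := fun x hx => N.smul_mem r hx
  have hCq : IsQuasiZSubmodule C := by
    constructor
    · intro htop
      apply hr
      rw [Submodule.mem_colon]
      intro p _
      exact (hmemC p).mp (htop ▸ Submodule.mem_top)
    · intro a ha
      have hra : r * a ∈ N.colon ⊤ := by
        rw [Submodule.mem_colon]
        intro p hp
        have h1 := Submodule.mem_colon.mp ha p hp
        have h2 : r • a • p ∈ N := (hmemC (a • p)).mp h1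
        rwa [← mul_smul] at h2
      have hkey := hN.2 (r * a) hra
      intro x hx
      rw [hmemC x]
      apply hkey
      simp only [primeRad] at hx ⊢
      apply Submodule.mem_sInf.mpr
      rintro P ⟨hPmin, hPle⟩
      by_cases haP : a ∈ P.colon ⊤
      · have hsle : Ideal.span {a} • (⊤ : Submodule R M) ≤ P :=
          (span_smul_top_le_iff a P).mpr
            (fun n => Submodule.mem_colon.mp haP n trivial)
        exact P.smul_mem r (Submodule.mem_sInf.mp hx P ⟨hPmin, hsle⟩)
      · have h1 : a • (r • x) ∈ P := by
          have h2 := (span_smul_top_le_iff (r * a) P).mp hPle x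
          rwa [mul_comm, mul_smul] at h2
        rcases hPmin.1.2 a (r • x) h1 with h | h
        · exact h
        · exact absurd h haP
  have hCN := hmax C hCq hNC
  rw [← hCN]
  exact hrm
end
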